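/- arXiv:2601.20754 — 3 statements merged into one kernel-verified Lean document; each statement's English description precedes it below -/
import Mathlib

section
/- Let l ≥ 1 be an integer and let b_0, b_1, …, b_l ∈ (0, ∞). Then there exists c ∈ (0, ∞) such that for every t ∈ [c, ∞) there exists a real polynomial w_t of degree exactly l+1 satisfying: w_t(n) = b_n for every integer n with 0 ≤ n ≤ l; w_t(l+1) = t; and w_t(n) > 0 for every integer n ≥ l+2. -/
/-!
Let `p` be the Lagrange interpolant of `b₀, …, b_l` at the nodes `0, …, l` and
`D = X (X - 1) ⋯ (X - l)`. Every `w = p + s D` still interpolates the `b_n`, and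
`w(l + 1) = p(l + 1) + (l + 1)! s`, so `t` determines `s`, which grows linearly with `t`.
Since `deg p < deg D`, `p(n) / D(n) → 0`, so this ratio is bounded below on `ℕ`, say by `-s₀`;
as `D(n) > 0` for `n > l`, `w(n) > 0` there as soon as `s > s₀`.
-/

open Polynomial Filter

theorem Polynomial.exists_degree_lt_eval_natCast_eq {F : Type*} [Field F] [CharZero F]
    (l : ℕ) (b : ℕ → F) :
    ∃ p : F[X], p.degree < ↑(l + 1) ∧ ∀ n ≤ l, p.eval (n : F) = b n := by
  have hinj : Set.InjOn (fun i : ℕ => (i : F)) (Finset.range (l + 1)) :=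
    fun _ _ _ _ h => Nat.cast_injective h
  refine ⟨Lagrange.interpolate (Finset.range (l + 1)) (fun i : ℕ => (i : F)) b, ?_, ?_⟩
  · simpa using Lagrange.degree_interpolate_lt b hinj
  · intro n hn
    exact Lagrange.eval_interpolate_at_node b hinj (Finset.mem_range.mpr (Nat.lt_succ_of_le hn))

theorem Polynomial.bddBelow_range_eval_natCast_div {p q : ℝ[X]} (h : p.degree < q.degree) :
    BddBelow (Set.range fun n : ℕ => p.eval (n : ℝ) / q.eval (n : ℝ)) :=
  ((div_tendsto_atTop_zero_of_degree_lt p q h).comp tendsto_natCast_atTop_atTop).bddBelow_range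

theorem Polynomial.natDegree_add_C_mul_descPochhammer {p : ℝ[X]} {k : ℕ} (hp : p.degree < k)
    {s : ℝ} (hs : s ≠ 0) : (p + C s * descPochhammer ℝ k).natDegree = k := by
  have hD : (C s * descPochhammer ℝ k).degree = k := by
    rw [degree_C_mul hs, degree_eq_natDegree (monic_descPochhammer ℝ k).ne_zero,
      descPochhammer_natDegree]
  rw [natDegree_add_eq_right_of_degree_lt (hD ▸ hp), natDegree_C_mul hs, descPochhammer_natDegree]

theorem Polynomial.exists_forall_eval_add_C_mul_descPochhammer_pos {p : ℝ[X]} {k : ℕ}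
    (hp : p.degree < k) :
    ∃ s₀ : ℝ, ∀ s, s₀ < s → ∀ n : ℕ, k ≤ n → 0 < (p + C s * descPochhammer ℝ k).eval (n : ℝ) := by
  have hdeg : p.degree < (descPochhammer ℝ k).degree := by
    rwa [degree_eq_natDegree (monic_descPochhammer ℝ k).ne_zero, descPochhammer_natDegree]
  obtain ⟨m, hm⟩ := bddBelow_range_eval_natCast_div hdeg
  refine ⟨-m, fun s hs n hn => ?_⟩
  have hkn : (k : ℝ) ≤ n := by exact_mod_cast hn
  have hDpos : 0 < (descPochhammer ℝ k).eval (n : ℝ) := descPochhammer_pos (by linarith)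
  have hratio : m ≤ p.eval (n : ℝ) / (descPochhammer ℝ k).eval (n : ℝ) := hm ⟨n, rfl⟩
  rw [le_div_iff₀ hDpos] at hratio
  rw [eval_add, eval_mul, eval_C]
  nlinarith

theorem stmt0_general (l : ℕ) (b : ℕ → ℝ) :
    ∃ c : ℝ, 0 < c ∧ ∀ t : ℝ, c ≤ t →
      ∃ w : Polynomial ℝ,
        w.natDegree = l + 1 ∧
        (∀ n : ℕ, n ≤ l → w.eval (n : ℝ) = b n) ∧
        w.eval ((l : ℝ) + 1) = t ∧
        (∀ n : ℕ, l + 2 ≤ n → 0 < w.eval (n : ℝ)) := by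
  obtain ⟨p, hpdeg, hpeval⟩ := exists_degree_lt_eval_natCast_eq l b
  obtain ⟨s₀, hpos⟩ := exists_forall_eval_add_C_mul_descPochhammer_pos hpdeg
  set F : ℝ := ((l + 1).factorial : ℝ)
  have hF : 0 < F := by positivity
  have hDl : (descPochhammer ℝ (l + 1)).eval ((l : ℝ) + 1) = F := by
    rw [← Nat.cast_add_one, descPochhammer_eval_eq_descFactorial, Nat.descFactorial_self]
  refine ⟨max 1 (p.eval ((l : ℝ) + 1) + F * (max s₀ 0 + 1)), by positivity, fun t ht => ?_⟩
  set s := (t - p.eval ((l : ℝ) + 1)) / F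
  have hs : max s₀ 0 < s := by
    rw [lt_div_iff₀ hF]
    linarith [le_max_right 1 (p.eval ((l : ℝ) + 1) + F * (max s₀ 0 + 1))]
  refine ⟨p + C s * descPochhammer ℝ (l + 1),
    natDegree_add_C_mul_descPochhammer hpdeg (lt_of_le_of_lt (le_max_right _ _) hs).ne',
    fun n hn => ?_, ?_, fun n hn => hpos s (lt_of_le_of_lt (le_max_left _ _) hs) n (by omega)⟩
  · simp [hpeval n hn, descPochhammer_eval_coe_nat_of_lt (Nat.lt_succ_of_le hn)]
  · rw [eval_add, eval_mul, eval_C, hDl, div_mul_cancel₀ _ hF.ne', add_sub_cancel]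

/-- Lemma of Jabłoński–Kośmider.
Let `l ≥ 1` and `b₀, …, b_l ∈ (0, ∞)`. Then there exists `c ∈ (0, ∞)` such that for every
`t ∈ [c, ∞)` there is a real polynomial `w_t` of degree exactly `l + 1` with `w_t(n) = b_n`
for `0 ≤ n ≤ l`, `w_t(l+1) = t`, and `w_t(n) > 0` for all integers `n ≥ l + 2`. -/
theorem stmt0 (l : ℕ) (hl : 1 ≤ l) (b : ℕ → ℝ) (hb : ∀ n, n ≤ l → 0 < b n) :
    ∃ c : ℝ, 0 < c ∧ ∀ t : ℝ, c ≤ t →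
      ∃ w : Polynomial ℝ,
        w.natDegree = l + 1 ∧
        (∀ n : ℕ, n ≤ l → w.eval (n : ℝ) = b n) ∧
        w.eval ((l : ℝ) + 1) = t ∧
        (∀ n : ℕ, l + 2 ≤ n → 0 < w.eval (n : ℝ)) :=
  stmt0_general l b
end

section
/- Let m ≥ 1, l ≥ 1 and k ≥ 1 be integers with l ≤ k + m − 2, and let λ_1, …, λ_l ∈ (0, ∞). Then for every choice of additional positive reals λ_{l+1}, …, λ_{k+m−2}, there exists a bounded sequence (λ_n)_{n≥1} ⊂ (0, ∞) whose first k+m−2 terms are λ_1, …, λ_{k+m−2} such that the unilateral weighted shift S_λ is a strict k-quasi-m-isometry; in particular, λ_1, …, λ_l admits a strict k-quasi-m-isometric completion. -/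
noncomputable section

variable {E : Type*} [NormedAddCommGroup E] [InnerProductSpace ℂ E] [CompleteSpace E]

/-- `B_m(T) = Σ_{j=0}^m (−1)^j C(m,j) T*^(m−j) T^(m−j)`. -/
def Bop (m : ℕ) (T : E →L[ℂ] E) : E →L[ℂ] E :=
  ∑ j ∈ Finset.range (m + 1),
    ((-1 : ℂ) ^ j * (m.choose j : ℂ)) •
      ((ContinuousLinearMap.adjoint T) ^ (m - j) * T ^ (m - j))

/-- `T` is `k`-quasi-`m`-isometric if `T*^k B_m(T) T^k = 0`. -/
def IsQuasiIsometric (k m : ℕ) (T : E →L[ℂ] E) : Prop :=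
  (ContinuousLinearMap.adjoint T) ^ k * Bop m T * T ^ k = 0

/-- The Hilbert space ℓ²(ℕ). -/
abbrev ellTwo : Type := lp (fun _ : ℕ => ℂ) 2

/-- The standard orthonormal basis vectors of ℓ²(ℕ). -/
def stdVec (n : ℕ) : ellTwo := lp.single 2 n 1

/-- `S` is the unilateral weighted shift with weights `(λ_n)_{n ≥ 1}`:
`S e_n = λ_{n+1} e_{n+1}`. -/
def IsWeightedShift (lam : ℕ → ℝ) (S : ellTwo →L[ℂ] ellTwo) : Prop :=
  ∀ n : ℕ, S (stdVec n) = (lam (n + 1) : ℂ) • stdVec (n + 1)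

/-- `(βλ)_s = Π_{i=1}^s λ_i²` (with `(βλ)_0 = 1`). -/
def betaSeq (lam : ℕ → ℝ) (s : ℕ) : ℝ :=
  ∏ i ∈ Finset.Icc 1 s, (lam i) ^ 2

/-- `lam'` is a completion of the initial weight data `lam` given on indices `1, …, l`:
it is a bounded sequence of positive reals agreeing with `lam` on `1, …, l`. -/
def IsWeightCompletion (l : ℕ) (lam lam' : ℕ → ℝ) : Prop :=
  (∀ n : ℕ, 0 < lam' n) ∧ (∃ C : ℝ, ∀ n : ℕ, lam' n ≤ C) ∧
    ∀ n : ℕ, 1 ≤ n → n ≤ l → lam' n = lam n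

/-!
For a weighted shift with moments `β n = λ₁² ⋯ λₙ²` one has `S*ʲ Sʲ eₙ = (β (n + j) / β n) eₙ`,
so `S*ᵏ B_m(S) Sᵏ` is diagonal with entries `Δᵐ β (n + k) / β n`: the shift is
`k`-quasi-`m`-isometric iff `Δᵐ β` vanishes on `[k, ∞)`. The prescribed weights fix
`β 0, …, β (k + m - 2)`. From `k` on, continue `β` by the Newton polynomial
`p y = ∑_{i < m - 1} Δⁱ β k · C(y, i) + c · C(y, m - 1)`, which reproduces the prescribed values
(Gregory–Newton) and has `Δ^(m-1) p = c`, hence `Δᵐ p = 0` but `Δ^(m-1) p ≠ 0`. A large `c` makes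
`p y ≥ C(y, m - 1) > 0` for `y ≥ m - 1` with `p (y + 1) / p y` bounded, so `λₙ = √(β n / β (n - 1))`
is a bounded positive completion.
-/

open Finset

section FwdDiff

variable {R : Type*} [CommRing R]

theorem fwdDiff_iter_eq_sum_choose (f : ℕ → R) (m n : ℕ) :
    (fwdDiff 1)^[m] f n = ∑ j ∈ range (m + 1), (-1) ^ j * m.choose j * f (n + (m - j)) := by
  rw [fwdDiff_iter_eq_sum_shift, ← sum_range_reflect]
  refine sum_congr rfl fun j hj => ?_
  have hjm : j ≤ m := Nat.lt_succ_iff.mp (mem_range.mp hj)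
  rw [Nat.add_sub_cancel, Nat.sub_sub_self hjm, Nat.choose_symm hjm, zsmul_eq_mul, smul_eq_mul,
    mul_one]
  push_cast
  ring

theorem fwdDiff_sum_mul_choose (d : ℕ → R) (N : ℕ) :
    fwdDiff 1 (fun y : ℕ => ∑ i ∈ range (N + 1), d i * y.choose i) =
      fun y => ∑ i ∈ range N, d (i + 1) * y.choose i := by
  ext y
  simp only [fwdDiff, ← sum_sub_distrib, ← mul_sub]
  rw [sum_range_succ']
  simp [Nat.choose_succ_succ']

theorem fwdDiff_iter_sum_mul_choose (d : ℕ → R) (N j : ℕ) :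
    (fwdDiff 1)^[j] (fun y : ℕ => ∑ i ∈ range (N + j), d i * y.choose i) =
      fun y => ∑ i ∈ range N, d (i + j) * y.choose i := by
  induction j generalizing d with
  | zero => rfl
  | succ j ih =>
    rw [Function.iterate_succ_apply, ← add_assoc, fwdDiff_sum_mul_choose, ih]
    simp only [add_assoc]

end FwdDiff

def newtonExt (g : ℕ → ℝ) (M : ℕ) (c : ℝ) (y : ℕ) : ℝ :=
  ∑ i ∈ range (M + 1), (if i < M then (fwdDiff 1)^[i] g 0 else c) * y.choose i

theorem newtonExt_eq (g : ℕ → ℝ) (M : ℕ) (c : ℝ) (y : ℕ) :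
    newtonExt g M c y = ∑ i ∈ range M, (fwdDiff 1)^[i] g 0 * y.choose i + c * y.choose M := by
  rw [newtonExt, sum_range_succ, if_neg (lt_irrefl M)]
  congr 1
  exact sum_congr rfl fun i hi => by rw [if_pos (mem_range.mp hi)]

theorem newtonExt_of_lt (g : ℕ → ℝ) {M : ℕ} (c : ℝ) {y : ℕ} (hy : y < M) :
    newtonExt g M c y = g y := by
  have hvanish : ∀ i ∈ range M, i ∉ range (y + 1) → (fwdDiff 1)^[i] g 0 * y.choose i = 0 :=
    fun i _ hi => by rw [Nat.choose_eq_zero_of_lt (by simpa using hi), Nat.cast_zero, mul_zero]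
  have hnewton := shift_eq_sum_fwdDiff_iter 1 g y 0
  rw [zero_add, smul_eq_mul, mul_one] at hnewton
  rw [newtonExt_eq, Nat.choose_eq_zero_of_lt hy, Nat.cast_zero, mul_zero, add_zero,
    ← sum_subset (range_subset_range.mpr hy) hvanish, hnewton]
  simp only [nsmul_eq_mul, mul_comm]

theorem fwdDiff_iter_newtonExt (g : ℕ → ℝ) (M : ℕ) (c : ℝ) :
    (fwdDiff 1)^[M] (newtonExt g M c) = fun _ => c := by
  have h := fwdDiff_iter_sum_mul_choose (fun i => if i < M then (fwdDiff 1)^[i] g 0 else c) 1 M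
  rw [add_comm 1 M] at h
  refine h.trans ?_
  ext
  simp

theorem fwdDiff_iter_succ_newtonExt (g : ℕ → ℝ) (M : ℕ) (c : ℝ) :
    (fwdDiff 1)^[M + 1] (newtonExt g M c) = 0 := by
  rw [Function.iterate_succ_apply', fwdDiff_iter_newtonExt]
  ext
  simp [fwdDiff]

section NewtonBounds

theorem choose_le_two_pow_mul_choose {y M i : ℕ} (hi : i ≤ M) (hM : M ≤ y) :
    y.choose i ≤ 2 ^ M * y.choose M := by
  calc y.choose i ≤ y.choose i * (y - i).choose (M - i) :=
        Nat.le_mul_of_pos_right _ (Nat.choose_pos (by omega))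
    _ = y.choose M * M.choose i := (Nat.choose_mul hi).symm
    _ ≤ 2 ^ M * y.choose M := by rw [mul_comm]; gcongr; exact Nat.choose_le_two_pow M i

theorem choose_succ_le_mul_choose {y M : ℕ} (hM : M ≤ y) :
    (y + 1).choose M ≤ (M + 1) * y.choose M := by
  obtain ⟨t, rfl⟩ := Nat.exists_eq_add_of_le hM
  have ht : M + t + 1 - M = t + 1 := by omega
  refine Nat.le_of_mul_le_mul_right ?_ (show 0 < t + 1 by omega)
  calc (M + t + 1).choose M * (t + 1) = (M + t).choose M * (M + t + 1) := by
        rw [← ht, Nat.choose_mul_succ_eq]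
    _ ≤ (M + t).choose M * ((M + 1) * (t + 1)) := by gcongr; nlinarith
    _ = (M + 1) * (M + t).choose M * (t + 1) := by ring

-- Large enough for the top term `c * y.choose M` to dominate once `y ≥ M`.
def newtonLead (g : ℕ → ℝ) (M : ℕ) : ℝ := 2 ^ M * ∑ i ∈ range M, |(fwdDiff 1)^[i] g 0| + 1

theorem newtonLead_pos (g : ℕ → ℝ) (M : ℕ) : 0 < newtonLead g M := by
  unfold newtonLead; positivity

variable {g : ℕ → ℝ} {M : ℕ} {c : ℝ}

theorem abs_sum_mul_choose_le (d : ℕ → ℝ) {y : ℕ} (hM : M ≤ y) :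
    |∑ i ∈ range M, d i * y.choose i| ≤ 2 ^ M * (∑ i ∈ range M, |d i|) * y.choose M := by
  rw [mul_comm (2 ^ M : ℝ), mul_assoc, sum_mul]
  refine (abs_sum_le_sum_abs _ _).trans (sum_le_sum fun i hi => ?_)
  rw [abs_mul, Nat.abs_cast]
  gcongr
  exact_mod_cast choose_le_two_pow_mul_choose (mem_range.mp hi).le hM

theorem choose_le_newtonExt (hc : newtonLead g M ≤ c) {y : ℕ}
    (hM : M ≤ y) : (y.choose M : ℝ) ≤ newtonExt g M c y := by
  have h := abs_sum_mul_choose_le (fun i => (fwdDiff 1)^[i] g 0) hM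
  have hy : (0 : ℝ) ≤ y.choose M := Nat.cast_nonneg _
  rw [newtonLead] at hc
  rw [newtonExt_eq]
  nlinarith [neg_abs_le (∑ i ∈ range M, (fwdDiff 1)^[i] g 0 * y.choose i)]

theorem newtonExt_le (hc : newtonLead g M ≤ c) {y : ℕ}
    (hM : M ≤ y) : newtonExt g M c y ≤ 2 * c * y.choose M := by
  have h := abs_sum_mul_choose_le (fun i => (fwdDiff 1)^[i] g 0) hM
  have hy : (0 : ℝ) ≤ y.choose M := Nat.cast_nonneg _
  rw [newtonLead] at hc
  rw [newtonExt_eq]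
  nlinarith [le_abs_self (∑ i ∈ range M, (fwdDiff 1)^[i] g 0 * y.choose i)]

theorem newtonExt_pos (hc : newtonLead g M ≤ c)
    (hg : ∀ y < M, 0 < g y) (y : ℕ) : 0 < newtonExt g M c y := by
  rcases lt_or_ge y M with hy | hy
  · exact newtonExt_of_lt g c hy ▸ hg y hy
  · exact (Nat.cast_pos.mpr (Nat.choose_pos hy)).trans_le (choose_le_newtonExt hc hy)

theorem newtonExt_succ_le (hc : newtonLead g M ≤ c) {y : ℕ}
    (hM : M ≤ y) : newtonExt g M c (y + 1) ≤ 2 * c * (M + 1) * newtonExt g M c y := by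
  have hc0 : 0 ≤ c := (newtonLead_pos g M).le.trans hc
  calc newtonExt g M c (y + 1) ≤ 2 * c * (y + 1).choose M := newtonExt_le hc (by omega)
    _ ≤ 2 * c * ((M + 1) * y.choose M) := by
        gcongr; exact_mod_cast choose_succ_le_mul_choose hM
    _ ≤ 2 * c * (M + 1) * newtonExt g M c y := by
        rw [← mul_assoc]; gcongr; exact choose_le_newtonExt hc hM

end NewtonBounds

section MomentExtension

variable (b : ℕ → ℝ) (k M : ℕ)

def momentExtension (n : ℕ) : ℝ :=
  if n < k then b n
  else newtonExt (fun r => b (k + r)) M (newtonLead (fun r => b (k + r)) M) (n - k)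

theorem momentExtension_of_lt {n : ℕ} (hn : n < k + M) : momentExtension b k M n = b n := by
  unfold momentExtension
  split_ifs with hk
  · rfl
  · rw [newtonExt_of_lt _ _ (by omega), Nat.add_sub_cancel' (by omega)]

theorem momentExtension_add (r : ℕ) :
    momentExtension b k M (r + k) =
      newtonExt (fun r => b (k + r)) M (newtonLead (fun r => b (k + r)) M) r := by
  simp [momentExtension]

theorem fwdDiff_iter_momentExtension (j n : ℕ) :
    (fwdDiff 1)^[j] (momentExtension b k M) (n + k) =
      (fwdDiff 1)^[j] (newtonExt (fun r => b (k + r)) M (newtonLead (fun r => b (k + r)) M)) n := by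
  rw [← fwdDiff_iter_comp_add]
  simp only [momentExtension_add]

theorem fwdDiff_iter_succ_momentExtension (n : ℕ) :
    (fwdDiff 1)^[M + 1] (momentExtension b k M) (n + k) = 0 := by
  rw [fwdDiff_iter_momentExtension, fwdDiff_iter_succ_newtonExt, Pi.zero_apply]

theorem fwdDiff_iter_momentExtension_pos : 0 < (fwdDiff 1)^[M] (momentExtension b k M) k := by
  have h := fwdDiff_iter_momentExtension b k M M 0
  rw [zero_add] at h
  rw [h, fwdDiff_iter_newtonExt]
  exact newtonLead_pos _ _

variable {b k M}

theorem momentExtension_pos (hb : ∀ n < k + M, 0 < b n) (n : ℕ) : 0 < momentExtension b k M n := by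
  rcases lt_or_ge n k with hn | hn
  · rw [momentExtension_of_lt b k M (by omega)]; exact hb n (by omega)
  · obtain ⟨r, rfl⟩ := Nat.exists_eq_add_of_le' hn
    rw [momentExtension_add]
    exact newtonExt_pos le_rfl (fun y hy => hb _ (by omega)) r

theorem momentExtension_succ_le {n : ℕ} (hn : k + M ≤ n) :
    momentExtension b k M (n + 1) ≤
      2 * newtonLead (fun r => b (k + r)) M * (M + 1) * momentExtension b k M n := by
  obtain ⟨r, rfl⟩ := Nat.exists_eq_add_of_le' (show k ≤ n by omega)
  rw [add_right_comm, momentExtension_add, momentExtension_add]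
  exact newtonExt_succ_le le_rfl (by omega)

end MomentExtension

section Weights

theorem betaSeq_succ (w : ℕ → ℝ) (n : ℕ) : betaSeq w (n + 1) = betaSeq w n * w (n + 1) ^ 2 :=
  prod_Icc_succ_top (by omega) _

theorem betaSeq_pos {w : ℕ → ℝ} {n : ℕ} (hw : ∀ i, 1 ≤ i → i ≤ n → 0 < w i) : 0 < betaSeq w n :=
  prod_pos fun i hi => pow_pos (hw i (mem_Icc.mp hi).1 (mem_Icc.mp hi).2) 2

theorem betaSeq_ne_zero {w : ℕ → ℝ} (hw : ∀ n, w n ≠ 0) (n : ℕ) : betaSeq w n ≠ 0 :=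
  prod_ne_zero_iff.mpr fun i _ => pow_ne_zero 2 (hw i)

theorem sqrt_betaSeq_div {w : ℕ → ℝ} {n : ℕ} (hn : 1 ≤ n) (hw : ∀ i, 1 ≤ i → i ≤ n → 0 < w i) :
    √(betaSeq w n / betaSeq w (n - 1)) = w n := by
  obtain ⟨n, rfl⟩ := Nat.exists_eq_add_of_le' hn
  have hpos : 0 < betaSeq w n := betaSeq_pos fun i hi hin => hw i hi (by omega)
  rw [Nat.add_sub_cancel, betaSeq_succ, mul_div_cancel_left₀ _ hpos.ne',
    Real.sqrt_sq (hw _ le_add_self le_rfl).le]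

-- At `n = 0` the truncated subtraction makes this `√(β 0 / β 0) = 1`.
def weightsOfMoments (β : ℕ → ℝ) (n : ℕ) : ℝ := √(β n / β (n - 1))

variable {β : ℕ → ℝ}

theorem weightsOfMoments_pos (hβ : ∀ n, 0 < β n) (n : ℕ) : 0 < weightsOfMoments β n :=
  Real.sqrt_pos.mpr (div_pos (hβ n) (hβ (n - 1)))

theorem betaSeq_weightsOfMoments (hβ : ∀ n, 0 < β n) :
    betaSeq (weightsOfMoments β) = (β 0)⁻¹ • β := by
  ext n
  rw [Pi.smul_apply, smul_eq_mul, inv_mul_eq_div]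
  induction n with
  | zero => simp [betaSeq, div_self (hβ 0).ne']
  | succ n ih =>
    rw [betaSeq_succ, ih, weightsOfMoments, Real.sq_sqrt (div_pos (hβ _) (hβ _)).le,
      Nat.add_sub_cancel]
    field_simp [(hβ n).ne']

theorem exists_weightsOfMoments_le (hβ : ∀ n, 0 < β n) {N : ℕ} {R : ℝ}
    (hR : ∀ n, N ≤ n → β (n + 1) ≤ R * β n) : ∃ C, ∀ n, weightsOfMoments β n ≤ C := by
  have hev : ∀ᶠ n in Filter.atTop, weightsOfMoments β n ≤ √R := by
    refine Filter.eventually_atTop.mpr ⟨N + 1, fun n hn => ?_⟩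
    obtain ⟨n, rfl⟩ := Nat.exists_eq_add_of_le' (show 1 ≤ n by omega)
    rw [weightsOfMoments, Nat.add_sub_cancel]
    exact Real.sqrt_le_sqrt ((div_le_iff₀ (hβ n)).mpr (hR n (by omega)))
  obtain ⟨C, hC⟩ := (Filter.isBoundedUnder_of_eventually_le hev).bddAbove_range
  exact ⟨C, fun n => hC (Set.mem_range_self n)⟩

end Weights

theorem inner_stdVec_left (n : ℕ) (x : ellTwo) : inner ℂ (stdVec n) x = x n := by
  simp [stdVec, lp.inner_single_left]

theorem inner_stdVec_stdVec (m n : ℕ) :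
    inner ℂ (stdVec m) (stdVec n) = if m = n then 1 else 0 := by
  rw [inner_stdVec_left, stdVec, lp.single_apply, Pi.single_apply]

theorem orthonormal_stdVec : Orthonormal ℂ stdVec :=
  orthonormal_iff_ite.mpr inner_stdVec_stdVec

theorem ext_inner_stdVec {x y : ellTwo} (h : ∀ n, inner ℂ (stdVec n) x = inner ℂ (stdVec n) y) :
    x = y :=
  lp.ext (funext fun n => by simpa only [inner_stdVec_left] using h n)

theorem clm_eq_zero_of_apply_stdVec {A : ellTwo →L[ℂ] ellTwo} (h : ∀ n, A (stdVec n) = 0) : A = 0 :=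
  lp.ext_continuousLinearMap (ENNReal.ofNat_ne_top (n := 2)) fun n =>
    ContinuousLinearMap.ext_ring (h n)

def IsDiagonal (a : ℕ → ℂ) (A : ellTwo →L[ℂ] ellTwo) : Prop :=
  ∀ n, A (stdVec n) = a n • stdVec n

theorem isDiagonal_one : IsDiagonal (fun _ => 1) 1 := fun n => by simp

theorem IsDiagonal.eq_zero_iff {a : ℕ → ℂ} {A : ellTwo →L[ℂ] ellTwo} (hA : IsDiagonal a A) :
    A = 0 ↔ ∀ n, a n = 0 := by
  refine ⟨fun h n => ?_, fun h => clm_eq_zero_of_apply_stdVec fun n => by rw [hA n, h n, zero_smul]⟩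
  have hn := hA n
  rw [h, zero_apply, eq_comm, smul_eq_zero] at hn
  exact hn.resolve_right (orthonormal_stdVec.ne_zero n)

theorem exists_isDiagonal (d : ℕ → ℂ) {C : ℝ} (hC : ∀ n, ‖d n‖ ≤ C) :
    ∃ D : ellTwo →L[ℂ] ellTwo, IsDiagonal d D := by
  have hmem : ∀ x : ellTwo, Memℓp (d * ⇑x) 2 := fun x =>
    ((lp.memℓp x).norm.const_mul C).mono fun n => by
      rw [Pi.mul_apply, norm_mul]; exact mul_le_mul_of_nonneg_right (hC n) (norm_nonneg _)
  let D : ellTwo →ₗ[ℂ] ellTwo :=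
    { toFun := fun x => ⟨d * ⇑x, hmem x⟩
      map_add' := fun x y => lp.ext (mul_add d x y)
      map_smul' := fun c x => lp.ext (mul_smul_comm c d x) }
  have hC0 : 0 ≤ C := (norm_nonneg _).trans (hC 0)
  refine ⟨D.mkContinuous C fun x => ?_, fun n => lp.ext ?_⟩
  · calc ‖D x‖ ≤ ‖(C : ℂ) • x‖ := lp.norm_mono two_ne_zero fun n => by
          simp only [D, LinearMap.coe_mk, AddHom.coe_mk, lp.coeFn_smul, Pi.smul_apply, Pi.mul_apply,
            smul_eq_mul, norm_mul, Complex.norm_real, Real.norm_of_nonneg hC0]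
          exact mul_le_mul_of_nonneg_right (hC n) (norm_nonneg _)
      _ = C * ‖x‖ := by rw [norm_smul, Complex.norm_real, Real.norm_of_nonneg hC0]
  · ext j
    simp only [D, stdVec, LinearMap.mkContinuous_apply, LinearMap.coe_mk, AddHom.coe_mk,
      lp.coeFn_smul, Pi.smul_apply, Pi.mul_apply, lp.single_apply, Pi.single_apply, smul_eq_mul]
    split_ifs with h <;> simp [h]

theorem exists_isWeightedShift_one : ∃ U : ellTwo →L[ℂ] ellTwo, IsWeightedShift 1 U := by
  have hv : Orthonormal ℂ fun n => stdVec (n + 1) :=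
    orthonormal_stdVec.comp _ (add_left_injective 1)
  exact ⟨hv.orthogonalFamily.linearIsometry.toContinuousLinearMap, fun n => by simp [stdVec]⟩

theorem exists_isWeightedShift (w : ℕ → ℝ) {C : ℝ} (hC : ∀ n, |w n| ≤ C) :
    ∃ S, IsWeightedShift w S := by
  obtain ⟨D, hD⟩ := exists_isDiagonal (fun n => (w (n + 1) : ℂ)) (C := C) fun n => by
    simpa using hC (n + 1)
  obtain ⟨U, hU⟩ := exists_isWeightedShift_one
  exact ⟨U.comp D, fun n => by
    rw [ContinuousLinearMap.comp_apply, hD, map_smul, hU, Pi.one_apply, Complex.ofReal_one,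
      one_smul]⟩

section WeightedShift

open ContinuousLinearMap

variable {w : ℕ → ℝ} {S : ellTwo →L[ℂ] ellTwo}

theorem IsWeightedShift.adjoint_stdVec_succ (hS : IsWeightedShift w S) (n : ℕ) :
    adjoint S (stdVec (n + 1)) = (w (n + 1) : ℂ) • stdVec n := by
  refine ext_inner_stdVec fun q => ?_
  rw [adjoint_inner_right, hS q, inner_smul_left, inner_smul_right, inner_stdVec_stdVec,
    inner_stdVec_stdVec, Complex.conj_ofReal]
  by_cases h : q = n <;> simp [h]

theorem IsWeightedShift.isDiagonal_adjoint_mul_mul (hS : IsWeightedShift w S) {a : ℕ → ℂ}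
    {A : ellTwo →L[ℂ] ellTwo} (hA : IsDiagonal a A) :
    IsDiagonal (fun n => (w (n + 1) ^ 2 : ℝ) * a (n + 1)) (adjoint S * A * S) := fun n => by
  rw [mul_apply_eq_comp, mul_apply_eq_comp, hS n, map_smul, hA, smul_smul, map_smul,
    hS.adjoint_stdVec_succ, smul_smul]
  congr 1
  push_cast
  ring

theorem IsWeightedShift.isDiagonal_adjoint_pow_mul_mul_pow (hS : IsWeightedShift w S)
    (hw : ∀ n, w n ≠ 0) {a : ℕ → ℂ} {A : ellTwo →L[ℂ] ellTwo} (hA : IsDiagonal a A) (j : ℕ) :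
    IsDiagonal (fun n => (betaSeq w (n + j) / betaSeq w n : ℝ) * a (n + j))
      (adjoint S ^ j * A * S ^ j) := by
  induction j generalizing a A with
  | zero => simpa [div_self (betaSeq_ne_zero hw _)] using hA
  | succ j ih =>
    have hj := ih (hS.isDiagonal_adjoint_mul_mul hA)
    rw [pow_succ, pow_succ', mul_assoc, mul_assoc, ← mul_assoc A, ← mul_assoc (adjoint S),
      ← mul_assoc]
    refine fun n => (hj n).trans ?_
    dsimp only
    rw [← add_assoc, betaSeq_succ]
    congr 1
    push_cast
    ring

theorem IsWeightedShift.isDiagonal_bop (hS : IsWeightedShift w S) (hw : ∀ n, w n ≠ 0) (m : ℕ) :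
    IsDiagonal (fun n => ((fwdDiff 1)^[m] (betaSeq w) n / betaSeq w n : ℝ)) (Bop m S) :=
  fun n => by
  dsimp only
  rw [Bop, _root_.sum_apply, fwdDiff_iter_eq_sum_choose, sum_div, Complex.ofReal_sum, sum_smul]
  refine sum_congr rfl fun j _ => ?_
  have hj := hS.isDiagonal_adjoint_pow_mul_mul_pow hw isDiagonal_one (m - j) n
  rw [mul_one] at hj
  rw [smul_apply, hj, smul_smul]
  congr 1
  push_cast
  ring

theorem IsWeightedShift.isQuasiIsometric_iff (hS : IsWeightedShift w S) (hw : ∀ n, w n ≠ 0)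
    (k m : ℕ) : IsQuasiIsometric k m S ↔ ∀ n, (fwdDiff 1)^[m] (betaSeq w) (n + k) = 0 := by
  rw [IsQuasiIsometric,
    (hS.isDiagonal_adjoint_pow_mul_mul_pow hw (hS.isDiagonal_bop hw m) k).eq_zero_iff]
  simp [betaSeq_ne_zero hw]

end WeightedShift

theorem stmt1_general (m k : ℕ) (hm : 1 ≤ m) (lam : ℕ → ℝ)
    (hpos : ∀ n : ℕ, 1 ≤ n → n ≤ k + m - 2 → 0 < lam n) :
    ∃ lam' : ℕ → ℝ, IsWeightCompletion (k + m - 2) lam lam' ∧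
      ∃ S : ellTwo →L[ℂ] ellTwo, IsWeightedShift lam' S ∧
        IsQuasiIsometric k m S ∧ ¬ IsQuasiIsometric k (m - 1) S := by
  obtain ⟨M, rfl⟩ : ∃ M, m = M + 1 := ⟨m - 1, by omega⟩
  set β := momentExtension (betaSeq lam) k M
  have hβ : ∀ n, 0 < β n :=
    momentExtension_pos fun n hn => betaSeq_pos fun i hi hin => hpos i hi (by omega)
  have hw : ∀ n, 0 < weightsOfMoments β n := weightsOfMoments_pos hβ
  obtain ⟨C, hC⟩ := exists_weightsOfMoments_le hβ fun n hn => momentExtension_succ_le hn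
  obtain ⟨S, hS⟩ := exists_isWeightedShift _ fun n => (abs_of_pos (hw n)).trans_le (hC n)
  have hfwd (j n : ℕ) :
      (fwdDiff 1)^[j] (betaSeq (weightsOfMoments β)) n = (β 0)⁻¹ * (fwdDiff 1)^[j] β n := by
    rw [betaSeq_weightsOfMoments hβ, fwdDiff_iter_const_smul, Pi.smul_apply, smul_eq_mul]
  refine ⟨weightsOfMoments β, ⟨hw, ⟨C, hC⟩, fun n hn1 hn2 => ?_⟩, S, hS, ?_, ?_⟩
  · have hβn (i : ℕ) (hi : i ≤ n) : β i = betaSeq lam i := momentExtension_of_lt _ _ _ (by omega)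
    rw [weightsOfMoments, hβn n le_rfl, hβn (n - 1) (Nat.sub_le n 1),
      sqrt_betaSeq_div hn1 fun i hi hin => hpos i hi (by omega)]
  · rw [hS.isQuasiIsometric_iff fun n => (hw n).ne']
    intro n
    rw [hfwd, fwdDiff_iter_succ_momentExtension, mul_zero]
  · rw [Nat.add_sub_cancel, hS.isQuasiIsometric_iff fun n => (hw n).ne']
    intro h
    have h0 := h 0
    rw [zero_add, hfwd] at h0
    exact (mul_pos (inv_pos.mpr (hβ 0)) (fwdDiff_iter_momentExtension_pos _ k M)).ne' h0

/-- Proposition, part (i).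
If `l ≤ k + m − 2` and positive weights `λ_1, …, λ_{k+m−2}` are given (extending the initial
data `λ_1, …, λ_l` by an arbitrary choice of positive reals), then there is a bounded positive
sequence extending `λ_1, …, λ_{k+m−2}` whose unilateral weighted shift is a strict
`k`-quasi-`m`-isometry. -/
theorem stmt1 (m l k : ℕ) (hm : 1 ≤ m) (hl : 1 ≤ l) (hk : 1 ≤ k)
    (hlk : l ≤ k + m - 2) (lam : ℕ → ℝ)
    (hpos : ∀ n : ℕ, 1 ≤ n → n ≤ k + m - 2 → 0 < lam n) :
    ∃ lam' : ℕ → ℝ, IsWeightCompletion (k + m - 2) lam lam' ∧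
      ∃ S : ellTwo →L[ℂ] ellTwo, IsWeightedShift lam' S ∧
        IsQuasiIsometric k m S ∧ ¬ IsQuasiIsometric k (m - 1) S :=
  stmt1_general m k hm lam hpos
end
end

section
/- Let λ = (λ_n)_{n≥1} be a bounded sequence of positive reals, let k ≥ 1 and m ≥ 1 be integers, and let S_λ be the associated unilateral weighted shift on ℓ²(ℕ). Then S_λ is k-quasi-m-isometric if and only if Σ_{j=0}^{m} (−1)^j binom(m,j) ‖S_λ^{s+j} e_k‖² = 0 for every integer s ≥ 0; equivalently, if and only if Σ_{j=0}^{m} (−1)^j binom(m,j) (βλ)_{k+s+j} = 0 for every integer s ≥ 0. -/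
noncomputable section

variable {E : Type*} [NormedAddCommGroup E] [InnerProductSpace ℂ E] [CompleteSpace E]

/-! The weighted shift maps `e_a` to a multiple of `e_(a+p)` under `S^p`, with
`β_a ‖S^p e_a‖² = β_(a+p)`. Hence `S*^k B_m(S) S^k` is diagonal in the standard basis, and its
`a`-th diagonal entry `Σ_j (-1)^j C(m,j) ‖S^(m-j+k) e_a‖²` equals `Δ^m β (a+k) / β_a`, where `Δ` is
the forward difference. Both conditions of the theorem are likewise `Δ^m β (k+s) = 0`, up to the
nonzero factors `β_k` and `(-1)^m`. -/

open Finset ContinuousLinearMap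
open scoped InnerProductSpace

lemma sum_neg_one_pow_mul_choose_mul_shift_reflect (f : ℕ → ℝ) (m y : ℕ) :
    ∑ j ∈ range (m + 1), (-1 : ℝ) ^ j * m.choose j * f (y + (m - j)) = (fwdDiff 1)^[m] f y := by
  rw [fwdDiff_iter_eq_sum_shift, ← sum_range_reflect]
  refine sum_congr rfl fun j hj => ?_
  have hj : j ≤ m := Nat.lt_succ_iff.mp (mem_range.mp hj)
  rw [Nat.add_sub_cancel, Nat.sub_sub_self hj, Nat.choose_symm hj, smul_eq_mul, mul_one,
    zsmul_eq_mul]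
  push_cast
  ring

lemma sum_neg_one_pow_mul_choose_mul_shift (f : ℕ → ℝ) (m y : ℕ) :
    ∑ j ∈ range (m + 1), (-1 : ℝ) ^ j * m.choose j * f (y + j) =
      (-1) ^ m * (fwdDiff 1)^[m] f y := by
  rw [fwdDiff_iter_eq_sum_shift, mul_sum]
  refine sum_congr rfl fun j hj => ?_
  obtain ⟨i, rfl⟩ := Nat.exists_eq_add_of_le (Nat.lt_succ_iff.mp (mem_range.mp hj))
  rw [Nat.add_sub_cancel_left, smul_eq_mul, mul_one, zsmul_eq_mul]
  push_cast
  have hsign : (-1 : ℝ) ^ (j + i) * (-1) ^ i = (-1) ^ j := by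
    rw [pow_add, mul_assoc, ← pow_add, Even.neg_one_pow ⟨i, rfl⟩, mul_one]
  rw [← hsign]
  ring

lemma betaSeq_pos_s3 {lam : ℕ → ℝ} (hpos : ∀ n, 0 < lam n) (s : ℕ) : 0 < betaSeq lam s :=
  prod_pos fun i _ => pow_pos (hpos i) 2

lemma HilbertBasis.continuousLinearMap_eq_zero {ι 𝕜 F : Type*} [RCLike 𝕜]
    [NormedAddCommGroup F] [InnerProductSpace 𝕜 F] (b : HilbertBasis ι 𝕜 F) (A : F →L[𝕜] F)
    (h : ∀ i j, ⟪b i, A (b j)⟫_𝕜 = 0) : A = 0 := by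
  refine ContinuousLinearMap.ext_on (s := Set.range b) ?_ ?_
  · exact Submodule.dense_iff_topologicalClosure_eq_top.mpr b.dense_span
  · rintro _ ⟨j, rfl⟩
    refine b.repr.injective (lp.ext (funext fun i => ?_))
    simp [b.repr_apply_apply, h]

lemma ContinuousLinearMap.adjoint_pow (T : E →L[ℂ] E) (n : ℕ) :
    adjoint (T ^ n) = adjoint T ^ n := by
  rw [← star_eq_adjoint, star_pow, star_eq_adjoint]

lemma inner_adjoint_pow_mul_Bop_mul_pow (T : E →L[ℂ] E) (k m : ℕ) (x y : E) :
    ⟪x, (adjoint T ^ k * Bop m T * T ^ k) y⟫_ℂ = ∑ j ∈ range (m + 1),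
      (-1 : ℂ) ^ j * m.choose j * ⟪(T ^ (m - j + k)) x, (T ^ (m - j + k)) y⟫_ℂ := by
  rw [mul_apply_eq_comp, mul_apply_eq_comp, ← adjoint_pow, adjoint_inner_right, Bop,
    _root_.sum_apply, inner_sum]
  refine sum_congr rfl fun j _ => ?_
  rw [_root_.smul_apply, inner_smul_right, mul_apply_eq_comp, ← adjoint_pow, adjoint_inner_right,
    ← mul_apply_eq_comp, ← mul_apply_eq_comp, ← pow_add]

lemma inner_self_adjoint_pow_mul_Bop_mul_pow (T : E →L[ℂ] E) (k m : ℕ) (x : E) :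
    ⟪x, (adjoint T ^ k * Bop m T * T ^ k) x⟫_ℂ = ((∑ j ∈ range (m + 1),
      (-1 : ℝ) ^ j * m.choose j * ‖(T ^ (m - j + k)) x‖ ^ 2 : ℝ) : ℂ) := by
  rw [inner_adjoint_pow_mul_Bop_mul_pow, Complex.ofReal_sum]
  refine sum_congr rfl fun j _ => ?_
  rw [inner_self_eq_norm_sq_to_K]
  push_cast
  rfl

lemma default_hilbertBasis_apply (n : ℕ) : (default : HilbertBasis ℕ ℂ ellTwo) n = stdVec n :=
  (HilbertBasis.repr_symm_single _ n).symm

namespace IsWeightedShift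

variable {lam : ℕ → ℝ} {S : ellTwo →L[ℂ] ellTwo}

lemma pow_apply_stdVec (hS : IsWeightedShift lam S) (p n : ℕ) :
    (S ^ p) (stdVec n) = ((∏ i ∈ Ioc n (n + p), lam i : ℝ) : ℂ) • stdVec (n + p) := by
  induction p with
  | zero => simp
  | succ p ih =>
    rw [pow_succ', mul_apply_eq_comp, ih, map_smul, hS, smul_smul, ← add_assoc,
      prod_Ioc_succ_top (Nat.le_add_right n p)]
    push_cast
    ring_nf

lemma inner_pow_apply_stdVec_of_ne (hS : IsWeightedShift lam S) (p : ℕ) {a b : ℕ} (hab : a ≠ b) :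
    ⟪(S ^ p) (stdVec a), (S ^ p) (stdVec b)⟫_ℂ = 0 := by
  rw [hS.pow_apply_stdVec, hS.pow_apply_stdVec, inner_smul_left, inner_smul_right,
    ← default_hilbertBasis_apply, ← default_hilbertBasis_apply,
    (HilbertBasis.orthonormal _).inner_eq_zero (by omega), mul_zero, mul_zero]

lemma betaSeq_mul_norm_pow_apply_stdVec_sq (hS : IsWeightedShift lam S) (p n : ℕ) :
    betaSeq lam n * ‖(S ^ p) (stdVec n)‖ ^ 2 = betaSeq lam (n + p) := by
  have hnorm : ‖stdVec (n + p)‖ = 1 := by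
    rw [← default_hilbertBasis_apply, (HilbertBasis.orthonormal _).1]
  have hIcc (s : ℕ) : Icc 1 s = Ioc 0 s := Icc_add_one_left_eq_Ioc 0 s
  rw [hS.pow_apply_stdVec, norm_smul, hnorm, mul_one, Complex.norm_real, Real.norm_eq_abs, sq_abs,
    betaSeq, betaSeq, ← prod_pow, hIcc, hIcc,
    prod_Ioc_consecutive _ (Nat.zero_le n) (Nat.le_add_right n p)]

lemma isQuasiIsometric_iff_sum_norm_sq (hS : IsWeightedShift lam S) (k m : ℕ) :
    IsQuasiIsometric k m S ↔ ∀ a, ∑ j ∈ range (m + 1),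
      (-1 : ℝ) ^ j * m.choose j * ‖(S ^ (m - j + k)) (stdVec a)‖ ^ 2 = 0 := by
  constructor
  · intro h a
    have hA : adjoint S ^ k * Bop m S * S ^ k = 0 := h
    have := inner_self_adjoint_pow_mul_Bop_mul_pow S k m (stdVec a)
    rwa [hA, zero_apply, inner_zero_right, eq_comm, Complex.ofReal_eq_zero] at this
  · intro h
    refine (default : HilbertBasis ℕ ℂ ellTwo).continuousLinearMap_eq_zero _ fun a b => ?_
    simp only [default_hilbertBasis_apply]
    rcases eq_or_ne a b with rfl | hab
    · rw [inner_self_adjoint_pow_mul_Bop_mul_pow, h, Complex.ofReal_zero]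
    · rw [inner_adjoint_pow_mul_Bop_mul_pow]
      exact sum_eq_zero fun j _ => by rw [hS.inner_pow_apply_stdVec_of_ne _ hab, mul_zero]

lemma isQuasiIsometric_iff_fwdDiff (hpos : ∀ n, 0 < lam n) (hS : IsWeightedShift lam S)
    (k m : ℕ) : IsQuasiIsometric k m S ↔ ∀ s, (fwdDiff 1)^[m] (betaSeq lam) (k + s) = 0 := by
  have hdiag (a : ℕ) : betaSeq lam a * ∑ j ∈ range (m + 1),
      (-1 : ℝ) ^ j * m.choose j * ‖(S ^ (m - j + k)) (stdVec a)‖ ^ 2 =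
        (fwdDiff 1)^[m] (betaSeq lam) (k + a) := by
    rw [mul_sum, ← sum_neg_one_pow_mul_choose_mul_shift_reflect]
    refine sum_congr rfl fun j _ => ?_
    rw [mul_left_comm, hS.betaSeq_mul_norm_pow_apply_stdVec_sq, add_comm (m - j), ← add_assoc,
      add_comm a]
  rw [hS.isQuasiIsometric_iff_sum_norm_sq]
  refine forall_congr' fun a => ?_
  rw [← hdiag, mul_eq_zero_iff_left (betaSeq_pos_s3 hpos a).ne']

end IsWeightedShift

theorem stmt3_general (lam : ℕ → ℝ) (hpos : ∀ n : ℕ, 0 < lam n)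
    (k m : ℕ)
    (S : ellTwo →L[ℂ] ellTwo) (hS : IsWeightedShift lam S) :
    (IsQuasiIsometric k m S ↔
      ∀ s : ℕ, ∑ j ∈ Finset.range (m + 1),
        (-1 : ℝ) ^ j * (m.choose j : ℝ) * ‖(S ^ (s + j)) (stdVec k)‖ ^ 2 = 0)
    ∧
    (IsQuasiIsometric k m S ↔
      ∀ s : ℕ, ∑ j ∈ Finset.range (m + 1),
        (-1 : ℝ) ^ j * (m.choose j : ℝ) * betaSeq lam (k + s + j) = 0) := by
  have hsign : (-1 : ℝ) ^ m ≠ 0 := pow_ne_zero _ (by norm_num)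
  have hnorm (s : ℕ) : betaSeq lam k * ∑ j ∈ range (m + 1),
      (-1 : ℝ) ^ j * m.choose j * ‖(S ^ (s + j)) (stdVec k)‖ ^ 2 =
        (-1) ^ m * (fwdDiff 1)^[m] (betaSeq lam) (k + s) := by
    rw [mul_sum, ← sum_neg_one_pow_mul_choose_mul_shift]
    refine sum_congr rfl fun j _ => ?_
    rw [mul_left_comm, hS.betaSeq_mul_norm_pow_apply_stdVec_sq, add_assoc]
  rw [hS.isQuasiIsometric_iff_fwdDiff hpos]
  refine ⟨forall_congr' fun s => ?_, forall_congr' fun s => ?_⟩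
  · rw [← mul_eq_zero_iff_left hsign, ← hnorm, mul_eq_zero_iff_left (betaSeq_pos_s3 hpos k).ne']
  · rw [sum_neg_one_pow_mul_choose_mul_shift, mul_eq_zero_iff_left hsign]

/-- A unilateral weighted shift `S_λ` with bounded positive weights is `k`-quasi-`m`-isometric
iff `Σ_{j=0}^m (−1)^j C(m,j) ‖S_λ^{s+j} e_k‖² = 0` for all `s ≥ 0`, equivalently iff
`Σ_{j=0}^m (−1)^j C(m,j) (βλ)_{k+s+j} = 0` for all `s ≥ 0`. -/
theorem stmt3 (lam : ℕ → ℝ) (hpos : ∀ n : ℕ, 0 < lam n) (hbdd : ∃ C : ℝ, ∀ n : ℕ, lam n ≤ C)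
    (k m : ℕ) (hk : 1 ≤ k) (hm : 1 ≤ m)
    (S : ellTwo →L[ℂ] ellTwo) (hS : IsWeightedShift lam S) :
    (IsQuasiIsometric k m S ↔
      ∀ s : ℕ, ∑ j ∈ Finset.range (m + 1),
        (-1 : ℝ) ^ j * (m.choose j : ℝ) * ‖(S ^ (s + j)) (stdVec k)‖ ^ 2 = 0)
    ∧
    (IsQuasiIsometric k m S ↔
      ∀ s : ℕ, ∑ j ∈ Finset.range (m + 1),
        (-1 : ℝ) ^ j * (m.choose j : ℝ) * betaSeq lam (k + s + j) = 0) :=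
  stmt3_general lam hpos k m S hS
end
end
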